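/- Let μ be the uniform distribution on the three standard basis vectors e₁, e₂, e₃ of ℝ³ (each with probability 1/3). Then for every C ∈ [0,1], g(C,μ) = √((1 + 2C²)/3). In particular g*(μ) = g(0,μ) = 1/√3. -/

import Mathlib

open MeasureTheory Real
open scoped ENNReal

noncomputable section

abbrev E3 := EuclideanSpace ℝ (Fin 3)

/-- The unit sphere S² in ℝ³. -/
def unitSphere : Set E3 := Metric.sphere (0 : E3) 1

/-- `g C μ` is the supremum over unit vectors `v` of `∫ √(C² + (1−C²)⟨r,v⟩²) dμ(r)`. -/
def g (C : ℝ) (μ : Measure E3) : ℝ :=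
  ⨆ v : unitSphere, ∫ r, Real.sqrt (C ^ 2 + (1 - C ^ 2) * (inner ℝ r (v : E3) : ℝ) ^ 2) ∂μ

/-!
For `μ` uniform on the standard basis, the integral against a unit vector `v` is the average of
`√(C² + (1 - C²) vᵢ²)` over the three coordinates. On the sphere the arguments of these square
roots sum to `1 + 2C²`, so by concavity of `√` (Jensen) the average is at most `√((1 + 2C²)/3)`,
with equality at the diagonal unit vector `(1, 1, 1)/√3`.
-/

theorem integral_inv_three_smul_dirac_add_dirac_add_dirac {α : Type*} [MeasurableSpace α]
    [MeasurableSingletonClass α] (f : α → ℝ) (a b c : α) :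
    ∫ x, f x ∂((3 : ℝ≥0∞)⁻¹ • (Measure.dirac a + Measure.dirac b + Measure.dirac c))
      = (f a + f b + f c) / 3 := by
  have hint : ∀ x : α, Integrable f (Measure.dirac x) := fun x => integrable_dirac enorm_lt_top
  rw [integral_smul_measure, integral_add_measure ((hint a).add_measure (hint b)) (hint c),
    integral_add_measure (hint a) (hint b), integral_dirac, integral_dirac, integral_dirac]
  simp [ENNReal.toReal_inv, div_eq_inv_mul]

def uniformBasis : Measure E3 :=
  (3 : ℝ≥0∞)⁻¹ • (Measure.dirac (EuclideanSpace.single (0 : Fin 3) (1 : ℝ))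
    + Measure.dirac (EuclideanSpace.single (1 : Fin 3) (1 : ℝ))
    + Measure.dirac (EuclideanSpace.single (2 : Fin 3) (1 : ℝ)))

theorem integral_uniformBasis_inner (φ : ℝ → ℝ) (v : E3) :
    ∫ r, φ (inner ℝ r v) ∂uniformBasis = (∑ i, φ (v i)) / 3 := by
  rw [uniformBasis, integral_inv_three_smul_dirac_add_dirac_add_dirac]
  simp [EuclideanSpace.inner_single_left, Fin.sum_univ_three]

theorem Real.sum_sqrt_div_card_le_sqrt {ι : Type*} [Fintype ι] [Nonempty ι] {p : ι → ℝ}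
    (hp : ∀ i, 0 ≤ p i) :
    (∑ i, √(p i)) / Fintype.card ι ≤ √((∑ i, p i) / Fintype.card ι) := by
  have hn : (0 : ℝ) < Fintype.card ι := Nat.cast_pos.2 Fintype.card_pos
  have := strictConcaveOn_sqrt.concaveOn.le_map_sum (t := Finset.univ)
    (w := fun _ => (Fintype.card ι : ℝ)⁻¹) (p := p) (fun _ _ => by positivity)
    (by simp [Finset.card_univ, hn.ne']) (fun i _ => hp i)
  simpa [← Finset.mul_sum, div_eq_inv_mul] using this

theorem sum_sq_eq_one_of_mem_unitSphere {v : E3} (hv : v ∈ unitSphere) : ∑ i, v i ^ 2 = 1 := by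
  rw [unitSphere, EuclideanSpace.sphere_zero_eq 1 zero_le_one] at hv
  simpa using hv

def diagonalUnit : E3 := WithLp.toLp 2 fun _ => (√3)⁻¹

theorem diagonalUnit_mem_unitSphere : diagonalUnit ∈ unitSphere := by
  rw [unitSphere, EuclideanSpace.sphere_zero_eq 1 zero_le_one]
  norm_num [diagonalUnit, Fin.sum_univ_three, inv_pow]

theorem g_uniformBasis {C : ℝ} (hC : C ^ 2 ≤ 1) :
    g C uniformBasis = √((1 + 2 * C ^ 2) / 3) := by
  set φ : ℝ → ℝ := fun t => √(C ^ 2 + (1 - C ^ 2) * t ^ 2)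
  have hφ_le : ∀ v ∈ unitSphere, (∑ i, φ (v i)) / 3 ≤ √((1 + 2 * C ^ 2) / 3) := by
    intro v hv
    have hjensen := Real.sum_sqrt_div_card_le_sqrt (p := fun i => C ^ 2 + (1 - C ^ 2) * v i ^ 2)
      fun i => add_nonneg (sq_nonneg C) (mul_nonneg (sub_nonneg.2 hC) (sq_nonneg _))
    have hsum : ∑ i, (C ^ 2 + (1 - C ^ 2) * v i ^ 2) = 1 + 2 * C ^ 2 := by
      rw [Finset.sum_add_distrib, ← Finset.mul_sum, sum_sq_eq_one_of_mem_unitSphere hv]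
      simp only [Finset.sum_const, Finset.card_univ, Fintype.card_fin, nsmul_eq_mul]
      ring
    simpa [hsum] using hjensen
  have hφ_diagonal : (∑ i, φ (diagonalUnit i)) / 3 = √((1 + 2 * C ^ 2) / 3) := by
    have harg : C ^ 2 + (1 - C ^ 2) * ((√3)⁻¹) ^ 2 = (1 + 2 * C ^ 2) / 3 := by
      rw [inv_pow, sq_sqrt zero_le_three]
      ring
    have hφ : ∀ i, φ (diagonalUnit i) = √((1 + 2 * C ^ 2) / 3) := fun i => by
      simp only [φ, diagonalUnit, harg]
    simp only [hφ, Finset.sum_const, Finset.card_univ, Fintype.card_fin, nsmul_eq_mul]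
    ring
  have : Nonempty unitSphere := ⟨⟨diagonalUnit, diagonalUnit_mem_unitSphere⟩⟩
  refine IsLUB.ciSup_eq (IsGreatest.isLUB ⟨⟨⟨diagonalUnit, diagonalUnit_mem_unitSphere⟩, ?_⟩, ?_⟩)
  · exact (integral_uniformBasis_inner φ _).trans hφ_diagonal
  · rintro _ ⟨v, rfl⟩
    exact (integral_uniformBasis_inner φ v).trans_le (hφ_le v v.2)

theorem g_XYZ (C : ℝ) (hC : C ∈ Set.Icc (0 : ℝ) 1) :
    g C ((3 : ℝ≥0∞)⁻¹ • (Measure.dirac (EuclideanSpace.single (0 : Fin 3) (1 : ℝ))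
        + Measure.dirac (EuclideanSpace.single (1 : Fin 3) (1 : ℝ))
        + Measure.dirac (EuclideanSpace.single (2 : Fin 3) (1 : ℝ))))
      = Real.sqrt ((1 + 2 * C ^ 2) / 3) ∧
    g 0 ((3 : ℝ≥0∞)⁻¹ • (Measure.dirac (EuclideanSpace.single (0 : Fin 3) (1 : ℝ))
        + Measure.dirac (EuclideanSpace.single (1 : Fin 3) (1 : ℝ))
        + Measure.dirac (EuclideanSpace.single (2 : Fin 3) (1 : ℝ))))
      = 1 / Real.sqrt 3 := by
  refine ⟨g_uniformBasis (pow_le_one₀ hC.1 hC.2), ?_⟩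
  rw [← uniformBasis, g_uniformBasis (by norm_num)]
  simp
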